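/- arXiv:1806.03736 — 6 statements merged into one kernel-verified Lean document; each statement's English description precedes it below -/
import Mathlib

section
/- Fix K(n) = o(n^{2/3}). Then uniformly for integers k with |k| < K(n), one has (n+k)! ~ √(2πn) (n/e)^n · exp(k·log n + k²/(2n)) as n → ∞; that is, the supremum over |k| < K(n) of |√(2πn)(n/e)^n exp(k log n + k²/(2n)) / (n+k)! − 1| tends to 0. -/
/-!
Put `m = n + k` and `x = k / n`. By Stirling's formula for `m!`, the ratio in question is, up to a
factor tending to `1`, equal to `exp(-log(1 + x)/2 - n ((1 + x) log(1 + x) - x - x²/2))`. The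
second-order Taylor expansion of `(1 + x) log(1 + x)` bounds the last term by
`4 n |x|³ = 4 |k|³/n²`, and `K(n) = o(n^{2/3})` says precisely that `K(n)³/n² → 0`. Uniformity in
`k` comes for free by taking all limits along the filter of pairs `(n, k)` with `n → ∞` and `k` in
the window.
-/

open Filter Real Topology

theorem abs_one_add_mul_log_one_add_sub_le {x : ℝ} (hx : |x| ≤ 1 / 2) :
    |(1 + x) * log (1 + x) - (x + x ^ 2 / 2)| ≤ 4 * |x| ^ 3 := by
  have hlog : |log (1 + x) - (x - x ^ 2 / 2)| ≤ 2 * |x| ^ 3 := by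
    have h := abs_log_sub_add_sum_range_le (x := -x) (by rw [abs_neg]; linarith) 2
    simp only [Finset.sum_range_succ, Finset.sum_range_zero, sub_neg_eq_add, abs_neg] at h
    calc |log (1 + x) - (x - x ^ 2 / 2)| ≤ |x| ^ 3 / (1 - |x|) := by
          convert h using 2; push_cast; ring
      _ ≤ 2 * |x| ^ 3 := by
          rw [div_le_iff₀ (by linarith)]
          nlinarith [pow_nonneg (abs_nonneg x) 3]
  have h1x : |1 + x| ≤ 3 / 2 := (abs_add_le _ _).trans (by norm_num; linarith)
  calc |(1 + x) * log (1 + x) - (x + x ^ 2 / 2)|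
        = |(1 + x) * (log (1 + x) - (x - x ^ 2 / 2)) - x ^ 3 / 2| := by ring_nf
    _ ≤ 3 / 2 * (2 * |x| ^ 3) + |x| ^ 3 / 2 := by
        refine (abs_sub _ _).trans (add_le_add ?_ ?_)
        · rw [abs_mul]; exact mul_le_mul h1x hlog (abs_nonneg _) (by norm_num)
        · rw [abs_div, abs_pow]; norm_num
    _ ≤ 4 * |x| ^ 3 := by nlinarith [pow_nonneg (abs_nonneg x) 3]

theorem Filter.Tendsto.of_pow_nhds_zero {α : Type*} {l : Filter α} {f : α → ℝ} {n : ℕ}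
    (hn : n ≠ 0) (h : Tendsto (fun a => f a ^ n) l (𝓝 0)) : Tendsto f l (𝓝 0) := by
  rw [tendsto_zero_iff_abs_tendsto_zero]
  have := h.abs.rpow_const (p := (n : ℝ)⁻¹) (Or.inr (by positivity))
  simp only [abs_zero, zero_rpow (inv_ne_zero (Nat.cast_ne_zero.mpr hn)), abs_pow,
    pow_rpow_inv_natCast (abs_nonneg _) hn] at this
  exact this

theorem tendsto_sSup_nhds_zero {ι : Type*} {l : Filter ι} {A : ι → Set ℝ}
    (h0 : ∀ i, ∀ x ∈ A i, 0 ≤ x) (h : ∀ ε > 0, ∀ᶠ i in l, ∀ x ∈ A i, x ≤ ε) :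
    Tendsto (fun i => sSup (A i)) l (𝓝 0) := by
  refine tendsto_order.2 ⟨fun a ha => Eventually.of_forall fun i =>
    ha.trans_le (Real.sSup_nonneg (h0 i)), fun a ha => ?_⟩
  filter_upwards [h (a / 2) (half_pos ha)] with i hi
  exact (Real.sSup_le hi (half_pos ha).le).trans_lt (half_lt_self ha)

theorem tendsto_stirling_div_factorial :
    Tendsto (fun m : ℕ => √(2 * π * m) * (m / exp 1) ^ m / m.factorial) atTop (𝓝 1) := by
  have h := (Asymptotics.isEquivalent_iff_tendsto_one (Eventually.of_forall fun m => by
    positivity)).mp Stirling.factorial_isEquivalent_stirling.symm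
  refine h.congr fun m => ?_
  simp only [Pi.div_apply, mul_right_comm _ π]

noncomputable def stirlingShiftExponent (n x : ℝ) : ℝ :=
  -log (1 + x) / 2 - n * ((1 + x) * log (1 + x) - (x + x ^ 2 / 2))

theorem stirling_mul_exp_div_stirling {n m : ℕ} {k : ℝ} (hn : 0 < n) (hm : 0 < m)
    (hmk : (m : ℝ) = n + k) :
    √(2 * π * n) * (n / exp 1) ^ n * exp (k * log n + k ^ 2 / (2 * n)) /
        (√(2 * π * m) * (m / exp 1) ^ m) = exp (stirlingShiftExponent n (k / n)) := by
  have hn' : (0 : ℝ) < n := Nat.cast_pos.mpr hn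
  have hm' : (0 : ℝ) < m := Nat.cast_pos.mpr hm
  have hlogm : log m = log n + log (1 + k / n) := by
    rw [show 1 + k / n = m / n by rw [hmk]; field_simp, log_div hm'.ne' hn'.ne']
    ring
  refine (exp_log (by positivity)).symm.trans (congrArg exp ?_)
  rw [stirlingShiftExponent, log_div (by positivity) (by positivity),
    log_mul (by positivity) (by positivity), log_mul (by positivity) (by positivity),
    log_mul (by positivity) (by positivity), log_exp,
    log_sqrt (by positivity), log_sqrt (by positivity), log_pow, log_pow,
    log_div hn'.ne' (exp_pos 1).ne', log_div hm'.ne' (exp_pos 1).ne', log_exp,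
    log_mul (by positivity) hn'.ne', log_mul (by positivity) hm'.ne', hlogm, hmk]
  field_simp
  ring

theorem tendsto_stirlingShiftExponent {ι : Type*} {l : Filter ι} {n x : ι → ℝ}
    (hx : Tendsto x l (𝓝 0)) (hnx : Tendsto (fun i => n i * x i ^ 3) l (𝓝 0)) :
    Tendsto (fun i => stirlingShiftExponent (n i) (x i)) l (𝓝 0) := by
  have hlog : Tendsto (fun i => log (1 + x i)) l (𝓝 0) := by
    simpa using (by simpa using hx.const_add 1 : Tendsto (fun i => 1 + x i) l (𝓝 1)).log
      one_ne_zero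
  have hcube : Tendsto (fun i => n i *
      ((1 + x i) * log (1 + x i) - (x i + x i ^ 2 / 2))) l (𝓝 0) := by
    refine squeeze_zero_norm' ?_
      (by simpa using (tendsto_zero_iff_norm_tendsto_zero.1 hnx).const_mul 4)
    filter_upwards [hx.abs.eventually (ge_mem_nhds (by norm_num : |(0 : ℝ)| < 1 / 2))] with i hi
    rw [norm_mul, Real.norm_eq_abs, Real.norm_eq_abs, mul_left_comm]
    exact mul_le_mul_of_nonneg_left (abs_one_add_mul_log_one_add_sub_le hi) (abs_nonneg _)
  simpa [stirlingShiftExponent] using (hlog.neg.div_const 2).sub hcube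

theorem tendsto_stirling_mul_exp_div_factorial_add {ι : Type*} {l : Filter ι} {n : ι → ℕ}
    {k : ι → ℤ} (hn : Tendsto n l atTop)
    (hk : Tendsto (fun i => (k i : ℝ) ^ 3 / (n i : ℝ) ^ 2) l (𝓝 0)) :
    Tendsto (fun i => √(2 * π * n i) * ((n i : ℝ) / exp 1) ^ n i *
        exp (k i * log (n i) + (k i : ℝ) ^ 2 / (2 * n i)) /
          (((n i : ℤ) + k i).toNat.factorial : ℝ)) l (𝓝 1) := by
  set x : ι → ℝ := fun i => (k i : ℝ) / n i
  set m : ι → ℕ := fun i => ((n i : ℤ) + k i).toNat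
  have hn' := tendsto_natCast_atTop_iff (R := ℝ).2 hn
  have hnx : Tendsto (fun i => (n i : ℝ) * x i ^ 3) l (𝓝 0) := by
    refine hk.congr' ?_
    filter_upwards [hn'.eventually_gt_atTop 0] with i hi
    simp only [x]
    field_simp
  have hx : Tendsto x l (𝓝 0) := by
    refine Tendsto.of_pow_nhds_zero three_ne_zero
      (squeeze_zero_norm' ?_ (tendsto_zero_iff_norm_tendsto_zero.1 hnx))
    filter_upwards [hn'.eventually_ge_atTop 1] with i hi
    rw [norm_mul, Real.norm_natCast]
    exact le_mul_of_one_le_left (norm_nonneg _) hi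
  have hm : ∀ᶠ i in l, (m i : ℝ) = n i + k i ∧ (n i : ℝ) / 2 ≤ m i := by
    filter_upwards [hn'.eventually_gt_atTop 0,
      hx.abs.eventually (ge_mem_nhds (by norm_num : |(0 : ℝ)| < 1 / 2))] with i hni hxi
    have hki : -(n i / 2 : ℝ) ≤ k i := by
      rw [abs_div, Nat.abs_cast, div_le_iff₀ hni] at hxi
      linarith [neg_abs_le (k i : ℝ)]
    have hmi : (m i : ℝ) = n i + k i := by
      have : (0 : ℤ) ≤ n i + k i := by exact_mod_cast (by linarith : (0 : ℝ) ≤ n i + k i)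
      simp only [m]
      exact_mod_cast Int.toNat_of_nonneg this
    exact ⟨hmi, by linarith⟩
  have hm_top : Tendsto m l atTop := tendsto_natCast_atTop_iff.1 <|
    tendsto_atTop_mono' l (hm.mono fun i h => h.2) (hn'.atTop_div_const two_pos)
  have := ((continuous_exp.tendsto 0).comp (tendsto_stirlingShiftExponent hx hnx)).mul
    (tendsto_stirling_div_factorial.comp hm_top)
  rw [exp_zero, one_mul] at this
  refine this.congr' ?_
  filter_upwards [hn'.eventually_gt_atTop 0, hm] with i hni ⟨hmi, hmn⟩
  have hmi' : 0 < m i := by exact_mod_cast (by linarith : (0 : ℝ) < m i)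
  simp only [Function.comp_apply, x]
  rw [← stirling_mul_exp_div_stirling (by exact_mod_cast hni) hmi' hmi, div_mul_div_cancel₀ (by positivity)]

theorem tendsto_pow_three_div_sq_of_isLittleO {K : ℕ → ℝ}
    (hK : K =o[atTop] fun n : ℕ => (n : ℝ) ^ ((2 : ℝ) / 3)) :
    Tendsto (fun n : ℕ => K n ^ 3 / (n : ℝ) ^ 2) atTop (𝓝 0) := by
  refine (hK.pow three_pos).tendsto_div_nhds_zero.congr fun n => ?_
  rw [← rpow_natCast (_ ^ _) 3, ← rpow_mul (Nat.cast_nonneg n)]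
  norm_num

/-- Fix `K(n) = o(n^{2/3})`.  Then uniformly for integers `k` with `|k| < K(n)` (and
`n + k ≥ 0`), one has `(n+k)! ~ √(2πn) (n/e)^n exp(k log n + k²/(2n))` as `n → ∞`:
the supremum over such `k` of
`|√(2πn)(n/e)^n exp(k log n + k²/(2n)) / (n+k)! − 1|` tends to `0`. -/
theorem stmt4 (K : ℕ → ℝ)
    (hK : (fun n : ℕ => K n) =o[atTop] (fun n : ℕ => (n : ℝ) ^ ((2 : ℝ) / 3))) :
    Tendsto (fun n : ℕ =>
      sSup {x : ℝ | ∃ k : ℤ, |(k : ℝ)| < K n ∧ 0 ≤ (n : ℤ) + k ∧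
        x = |Real.sqrt (2 * Real.pi * n) * ((n : ℝ) / Real.exp 1) ^ n *
          Real.exp (k * Real.log n + (k : ℝ) ^ 2 / (2 * n)) /
            (Nat.factorial ((n : ℤ) + k).toNat : ℝ) - 1|})
      atTop (nhds 0) := by
  set window : Filter (ℕ × ℤ) :=
    atTop.comap Prod.fst ⊓ 𝓟 {p | |(p.2 : ℝ)| < K p.1 ∧ 0 ≤ (p.1 : ℤ) + p.2}
  have hn : Tendsto Prod.fst window atTop := tendsto_comap.mono_left inf_le_left
  have hk : Tendsto (fun p : ℕ × ℤ => (p.2 : ℝ) ^ 3 / (p.1 : ℝ) ^ 2) window (𝓝 0) := by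
    refine squeeze_zero_norm' ?_ ((tendsto_pow_three_div_sq_of_isLittleO hK).comp hn)
    refine eventually_inf_principal.2 (Eventually.of_forall fun p hp => ?_)
    rw [norm_div, norm_pow, norm_pow, Real.norm_eq_abs, Real.norm_eq_abs, Nat.abs_cast]
    exact div_le_div_of_nonneg_right
      (pow_le_pow_left₀ (abs_nonneg _) hp.1.le 3) (by positivity)
  have hR := ((tendsto_stirling_mul_exp_div_factorial_add hn hk).sub_const 1).abs
  rw [sub_self, abs_zero] at hR
  refine tendsto_sSup_nhds_zero (fun n => ?_) fun ε hε => ?_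
  · rintro _ ⟨k, -, -, rfl⟩
    exact abs_nonneg _
  · have := hR.eventually (ge_mem_nhds hε)
    rw [eventually_inf_principal, eventually_comap] at this
    filter_upwards [this] with n hle
    rintro _ ⟨k, hkK, hnk, rfl⟩
    exact hle (n, k) rfl ⟨hkK, hnk⟩
end

section
/- Let A be an affine subspace of R^k defined by linear equations with rational coefficients, and suppose A contains an integral point p. Then there exists a constant D such that for every x ∈ A there is an integral point y ∈ A with ||x − y||_∞ < D. -/
/-!
The real solutions of a homogeneous linear system with rational coefficients are spanned by
finitely many integral solutions `u₁, …, u_r`: the coordinates of a real solution in a `ℚ`-basis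
of the `ℚ`-span of its entries are rational solutions, and denominators can be cleared.
For `x ∈ A` write `x - p = ∑ cₜ uₜ`; then `y = p + ∑ ⌊cₜ⌋ uₜ` is an integral point of `A`
and `x - y = ∑ fract(cₜ) uₜ` has sup norm at most `∑ ‖uₜ‖`.
-/

open Matrix Submodule Module

theorem mem_span_image_ker_of_map_mulVec_eq_zero {K L : Type*} [Field K] [Field L] [Algebra K L]
    {m n : Type*} [Fintype n] (C : Matrix m n K) {x : n → L}
    (hx : C.map (algebraMap K L) *ᵥ x = 0) :
    x ∈ span L ((Algebra.linearMap K L).compLeft n '' LinearMap.ker C.mulVecLin) := by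
  let V := span K (Set.range x)
  have : FiniteDimensional K V := FiniteDimensional.span_of_finite K (Set.finite_range x)
  let e := finBasis K V
  let a : Fin (finrank K V) → n → K := fun t j => e.repr ⟨x j, subset_span ⟨j, rfl⟩⟩ t
  have hx_eq : x = ∑ t, (e t : L) • (algebraMap K L ∘ a t) := by
    funext j
    have := congrArg Subtype.val (e.sum_repr ⟨x j, subset_span ⟨j, rfl⟩⟩)
    simp only [coe_sum, coe_smul] at this
    conv_lhs => rw [← this]
    simp only [Finset.sum_apply, Pi.smul_apply, Function.comp_apply, smul_eq_mul, a]
    simp only [Algebra.smul_def, mul_comm]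
  have ha : ∀ t, C *ᵥ a t = 0 := by
    have hli : LinearIndependent K fun t => (e t : L) :=
      e.linearIndependent.map' V.subtype V.ker_subtype
    intro t
    funext i
    have hsum : ∑ t, (C *ᵥ a t) i • (e t : L) = 0 := by
      rw [← Pi.zero_apply (M := fun _ => L) i, ← hx, hx_eq]
      simp only [mulVec_sum, Finset.sum_apply, mulVec_smul, Pi.smul_apply, smul_eq_mul,
        ← RingHom.map_mulVec]
      simp only [Algebra.smul_def, mul_comm]
    exact linearIndependent_iff'.mp hli _ _ hsum t (Finset.mem_univ t)
  rw [hx_eq]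
  exact sum_mem fun t _ => smul_mem _ _ (subset_span ⟨a t, ha t, rfl⟩)

theorem exists_intCast_eq_smul {n : Type*} [Finite n] (v : n → ℚ) :
    ∃ q : ℚ, q ≠ 0 ∧ ∃ u : n → ℤ, (fun j => (u j : ℚ)) = q • v := by
  obtain ⟨⟨N, hN⟩, hint⟩ := IsLocalization.exist_integer_multiples_of_finite (nonZeroDivisors ℤ) v
  choose u hu using hint
  refine ⟨N, by exact_mod_cast nonZeroDivisors.ne_zero hN, u, funext fun j => ?_⟩
  simpa [zsmul_eq_mul] using hu j

theorem Submodule.exists_int_family_span_eq {n : Type*} [Finite n] (W : Submodule ℚ (n → ℚ)) :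
    ∃ (r : ℕ) (u : Fin r → n → ℤ), span ℚ (Set.range fun t j => (u t j : ℚ)) = W := by
  let b := finBasis ℚ W
  choose q hq u hu using fun t => exists_intCast_eq_smul (b t : n → ℚ)
  let w := b.isUnitSMul fun t => (hq t).isUnit
  have hw : (fun t j => (u t j : ℚ)) = W.subtype ∘ w := by
    funext t; simp [w, Basis.isUnitSMul_apply, hu]
  refine ⟨_, u, ?_⟩
  rw [hw, Set.range_comp, ← map_span, w.span_eq, map_subtype_top]

theorem exists_int_family_span_ker_map {L : Type*} [Field L] [CharZero L] {m n : Type*} [Fintype n]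
    (C : Matrix m n ℚ) :
    ∃ (r : ℕ) (u : Fin r → n → ℤ), (∀ t, C.map (algebraMap ℚ L) *ᵥ (fun j => (u t j : L)) = 0) ∧
      ∀ x : n → L, C.map (algebraMap ℚ L) *ᵥ x = 0 →
        x ∈ span L (Set.range fun t j => (u t j : L)) := by
  obtain ⟨r, u, hu⟩ := (LinearMap.ker C.mulVecLin).exists_int_family_span_eq
  have hker : ∀ t, C *ᵥ (fun j => (u t j : ℚ)) = 0 := fun t =>
    (hu ▸ subset_span ⟨t, rfl⟩ : (fun j => (u t j : ℚ)) ∈ LinearMap.ker C.mulVecLin)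
  have hcast : ∀ t, algebraMap ℚ L ∘ (fun j => (u t j : ℚ)) = fun j => (u t j : L) :=
    fun t => funext fun j => by simp
  refine ⟨r, u, fun t => ?_, fun x hx => ?_⟩
  · funext i
    rw [← hcast t, ← RingHom.map_mulVec, hker t, Pi.zero_apply, map_zero, Pi.zero_apply]
  · refine span_le.mpr ?_ (mem_span_image_ker_of_map_mulVec_eq_zero C hx)
    refine subset_trans ?_ (span_le_restrictScalars ℚ L _)
    rw [← hu, ← map_coe, map_span, ← Set.range_comp]
    exact (congrArg (fun f => (span ℚ (Set.range f) : Set (n → L))) (funext hcast)).subset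

theorem exists_norm_sub_sum_zsmul_le {E : Type*} [SeminormedAddCommGroup E] [NormedSpace ℝ E]
    {ι : Type*} [Fintype ι] (v : ι → E) {x : E} (hx : x ∈ span ℝ (Set.range v)) :
    ∃ c : ι → ℤ, ‖x - ∑ t, c t • v t‖ ≤ ∑ t, ‖v t‖ := by
  obtain ⟨a, rfl⟩ := (mem_span_range_iff_exists_fun ℝ).mp hx
  refine ⟨fun t => ⌊a t⌋, ?_⟩
  have hfract : ∑ t, a t • v t - ∑ t, ⌊a t⌋ • v t = ∑ t, Int.fract (a t) • v t := by
    rw [← Finset.sum_sub_distrib]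
    refine Finset.sum_congr rfl fun t _ => ?_
    rw [← Int.cast_smul_eq_zsmul ℝ, ← sub_smul, Int.fract]
  calc ‖∑ t, a t • v t - ∑ t, ⌊a t⌋ • v t‖ = ‖∑ t, Int.fract (a t) • v t‖ := by rw [hfract]
    _ ≤ ∑ t, ‖Int.fract (a t) • v t‖ := norm_sum_le _ _
    _ ≤ ∑ t, ‖v t‖ := Finset.sum_le_sum fun t _ => by
        rw [norm_smul, Real.norm_of_nonneg (Int.fract_nonneg _)]
        exact mul_le_of_le_one_left (norm_nonneg _) (Int.fract_lt_one _).le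

/-- Let `A ⊆ ℝ^k` be an affine subspace cut out by linear equations with rational
coefficients, containing an integral point `p`.  Then there is `D` such that every
`x ∈ A` is within `∞`-distance `< D` of an integral point of `A`. -/
theorem stmt5 (k m : ℕ) (C : Matrix (Fin m) (Fin k) ℚ) (b : Fin m → ℚ)
    (p : Fin k → ℤ) (hp : ∀ i, ∑ j, (C i j : ℝ) * (p j : ℝ) = (b i : ℝ)) :
    ∃ D : ℝ, ∀ x : Fin k → ℝ, (∀ i, ∑ j, (C i j : ℝ) * x j = (b i : ℝ)) →
      ∃ y : Fin k → ℤ, (∀ i, ∑ j, (C i j : ℝ) * (y j : ℝ) = (b i : ℝ)) ∧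
        ∀ j, |x j - (y j : ℝ)| < D := by
  obtain ⟨r, u, hu_ker, hu_span⟩ := exists_int_family_span_ker_map (L := ℝ) C
  set A := C.map (algebraMap ℚ ℝ)
  have hp' : A *ᵥ (fun j => (p j : ℝ)) = fun i => (b i : ℝ) := funext hp
  refine ⟨∑ t, ‖fun j => (u t j : ℝ)‖ + 1, fun x hx => ?_⟩
  have hxp : A *ᵥ (x - fun j => (p j : ℝ)) = 0 := by
    rw [mulVec_sub, show A *ᵥ x = fun i => (b i : ℝ) from funext hx, hp', sub_self]
  obtain ⟨c, hc⟩ := exists_norm_sub_sum_zsmul_le _ (hu_span _ hxp)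
  let y := p + ∑ t, c t • u t
  have hy : (fun j => (y j : ℝ)) = (fun j => (p j : ℝ)) + ∑ t, c t • fun j => (u t j : ℝ) := by
    funext j; simp [y]
  refine ⟨y, fun i => ?_, fun j => ?_⟩
  · have hAy : A *ᵥ (fun j => (y j : ℝ)) = fun i => (b i : ℝ) := by
      rw [hy, mulVec_add, mulVec_sum, hp']
      simp only [mulVec_smul, hu_ker, smul_zero, Finset.sum_const_zero, add_zero]
    exact congrFun hAy i
  · calc |x j - y j| = ‖(x - fun j => (y j : ℝ)) j‖ := by simp [Real.norm_eq_abs]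
      _ ≤ ‖x - fun j => (y j : ℝ)‖ := norm_le_pi_norm _ j
      _ = ‖(x - fun j => (p j : ℝ)) - ∑ t, c t • fun j => (u t j : ℝ)‖ := by
        rw [hy, sub_add_eq_sub_sub]
      _ < ∑ t, ‖fun j => (u t j : ℝ)‖ + 1 := hc.trans_lt (lt_add_one _)
end

section
/- Let 0 ≤ a_1, ..., a_d ≤ n and let A_1, ..., A_d be independent uniformly random subsets of {1,...,n} with |A_i| = a_i. Then for every k > 0, P(| |A_1 ∩ ... ∩ A_d| − n·∏_{i=1}^d (a_i/n) | ≥ (d−1)k) ≤ 2(d−1) exp(−2k²/n). -/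
/-!
Peel off the first set: with `B = A₂ ∩ ⋯ ∩ A_d` fixed, `|A₁ ∩ B|` is hypergeometric with mean
`a₁|B|/n`. Expanding `u ^ |A₁ ∩ B|` over the subsets of `A₁ ∩ B` shows that its moment generating
function at `u ≥ 1` is dominated by that of a binomial, so Chernoff's method and Hoeffding's lemma
for a Bernoulli variable bound each tail by `exp (-2k²/n)`. Since `a₁/n ≤ 1`, the deviation of the
full intersection from `n ∏ aᵢ/n` is at most the deviation of `|A₁ ∩ B|` plus that of `B`, so by
induction a deviation `(d-1)k` forces one of `d-1` such steps to deviate by `k`; a union bound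
finishes.
-/

open Finset Fintype Real

lemma Nat.descFactorial_mul_pow_le_descFactorial_mul_pow {a N : ℕ} (h : a ≤ N) (t : ℕ) :
    a.descFactorial t * N ^ t ≤ N.descFactorial t * a ^ t := by
  induction t with
  | zero => simp
  | succ t ih =>
    have hstep : (a - t) * N ≤ (N - t) * a := by
      rw [Nat.sub_mul, Nat.sub_mul, mul_comm N a]
      exact Nat.sub_le_sub_left (Nat.mul_le_mul_left t h) _
    calc a.descFactorial (t + 1) * N ^ (t + 1)
        = ((a - t) * N) * (a.descFactorial t * N ^ t) := by
          rw [Nat.descFactorial_succ, pow_succ]; ring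
      _ ≤ ((N - t) * a) * (N.descFactorial t * a ^ t) := Nat.mul_le_mul hstep ih
      _ = N.descFactorial (t + 1) * a ^ (t + 1) := by
          rw [Nat.descFactorial_succ, pow_succ]; ring

lemma Nat.choose_mul_pow_le_choose_mul_pow {a N : ℕ} (h : a ≤ N) (t : ℕ) :
    a.choose t * N ^ t ≤ N.choose t * a ^ t := by
  have := Nat.descFactorial_mul_pow_le_descFactorial_mul_pow h t
  rw [Nat.descFactorial_eq_factorial_mul_choose, Nat.descFactorial_eq_factorial_mul_choose,
    mul_assoc, mul_assoc] at this
  exact Nat.le_of_mul_le_mul_left this t.factorial_pos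

/-- Hoeffding's lemma for a Bernoulli variable of parameter `p`. -/
lemma one_add_mul_exp_sub_one_le_exp (p t : ℝ) (hp0 : 0 ≤ p) (hp1 : p ≤ 1) :
    1 + p * (exp t - 1) ≤ exp (p * t + t ^ 2 / 8) := by
  open ProbabilityTheory MeasureTheory in
  let X : Bool → ℝ := fun b => if b then 1 else 0
  let μ := Ber(true, false, (⟨p, hp0, hp1⟩ : unitInterval))
  have hmean : ∫ b, X b ∂μ = p := by simp [μ, X, integral_bernoulliMeasure]
  have hmgf := (hasSubgaussianMGF_of_mem_Icc (a := 0) (b := 1)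
    (measurable_of_finite X).aemeasurable (ae_of_all μ fun b => by cases b <;> simp [X])).mgf_le t
  simp [mgf, hmean, μ, X, integral_bernoulliMeasure] at hmgf
  have h1 : exp (t * (1 - p)) = exp t * exp (-(t * p)) := by rw [← exp_add]; ring_nf
  have h2 : exp (p * t) * exp (-(t * p)) = 1 := by rw [← exp_add]; ring_nf; exact exp_zero
  calc 1 + p * (exp t - 1)
      = exp (p * t) * (p * exp (t * (1 - p)) + (1 - p) * exp (-(t * p))) := by
        rw [h1]; linear_combination (1 + p * (exp t - 1)) * h2.symm
    _ ≤ exp (p * t) * exp (t ^ 2 / 8) := by gcongr; exact hmgf.trans_eq (by ring_nf)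
    _ = exp (p * t + t ^ 2 / 8) := (exp_add _ _).symm

lemma Fin.inf_univ_succ {β : Type*} [SemilatticeInf β] [OrderTop β] {d : ℕ}
    (A : Fin (d + 1) → β) : univ.inf A = A 0 ⊓ univ.inf (Fin.tail A) := by
  rw [Fin.univ_succ, inf_cons, inf_map]; rfl

lemma card_filter_piFinset_zero_tail_le {d : ℕ} {α : Fin (d + 1) → Type*}
    (S : ∀ i, Finset (α i)) (Q : α 0 → (∀ i, α (Fin.succ i)) → Prop) [∀ x t, Decidable (Q x t)]
    {C : ℝ} (hC : ∀ t ∈ piFinset (Fin.tail S), (#{x ∈ S 0 | Q x t} : ℝ) ≤ C) :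
    (#{r ∈ piFinset S | Q (r 0) (Fin.tail r)} : ℝ) ≤ C * #(piFinset (Fin.tail S)) := by
  classical
  have hmaps : ∀ r ∈ {r ∈ piFinset S | Q (r 0) (Fin.tail r)},
      Fin.tail r ∈ piFinset (Fin.tail S) :=
    fun r hr => (Fin.mem_piFinset_iff_zero_tail.1 (mem_filter.1 hr).1).2
  rw [card_eq_sum_card_fiberwise hmaps, Nat.cast_sum, mul_comm, ← nsmul_eq_mul, ← sum_const]
  refine sum_le_sum fun t ht => le_trans ?_ (hC t ht)
  refine Nat.cast_le.2 (card_le_card_of_injOn (· 0) ?_ ?_)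
  · intro r hr
    simp only [coe_filter, Set.mem_ofPred_eq, mem_filter] at hr ⊢
    obtain ⟨⟨hrS, hQ⟩, rfl⟩ := hr
    exact ⟨(Fin.mem_piFinset_iff_zero_tail.1 hrS).1, hQ⟩
  · intro r hr r' hr' h
    simp only [coe_filter, Set.mem_ofPred_eq] at hr hr'
    rw [← Fin.cons_self_tail r, ← Fin.cons_self_tail r', hr.2, hr'.2]
    exact congrArg (Fin.cons · t) h

section

variable {α : Type*} [Fintype α] [DecidableEq α]

lemma card_filter_powersetCard_subset_mul_pow_le (T : Finset α) (a : ℕ) :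
    #{A ∈ powersetCard a univ | T ⊆ A} * card α ^ #T ≤ (card α).choose a * a ^ #T := by
  rcases lt_or_ge (card α) a with haN | haN
  · simp [powersetCard_eq_empty.2 (card_univ (α := α) ▸ haN)]
  rcases lt_or_ge a #T with hTa | hTa
  · rw [filter_false_of_mem fun A hA hTA =>
      (card_le_card hTA).not_gt ((mem_powersetCard.1 hA).2 ▸ hTa)]
    simp
  have hTN : #T ≤ card α := hTa.trans haN
  rw [card_filter_powersetCard_subset T univ a (subset_univ T) hTa, card_univ]
  refine Nat.le_of_mul_le_mul_left ?_ (Nat.choose_pos hTN)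
  calc (card α).choose #T * ((card α - #T).choose (a - #T) * card α ^ #T)
      = (card α).choose a * (a.choose #T * card α ^ #T) := by
        rw [← mul_assoc, ← Nat.choose_mul hTa, mul_assoc]
    _ ≤ (card α).choose a * ((card α).choose #T * a ^ #T) :=
        Nat.mul_le_mul_left _ (Nat.choose_mul_pow_le_choose_mul_pow haN _)
    _ = (card α).choose #T * ((card α).choose a * a ^ #T) := by ring

lemma card_filter_powersetCard_subset_le (T : Finset α) (a : ℕ) :
    (#{A ∈ powersetCard a univ | T ⊆ A} : ℝ) ≤ (card α).choose a * ((a : ℝ) / card α) ^ #T := by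
  rcases (#T).eq_zero_or_pos with hT | hT
  · rw [hT, pow_zero, mul_one, ← card_univ, ← card_powersetCard]
    exact_mod_cast card_filter_le _ _
  have hN : (0 : ℝ) < card α := by exact_mod_cast hT.trans_le (card_le_univ T)
  rw [div_pow, mul_div_assoc', le_div_iff₀ (by positivity)]
  exact_mod_cast card_filter_powersetCard_subset_mul_pow_le T a

/-- `1 ≤ u` makes the terms of the expansion over `T ⊆ A ∩ B` nonnegative, so that they can be
bounded one by one. -/
lemma sum_powersetCard_pow_card_inter_le (B : Finset α) (a : ℕ) {u : ℝ} (hu : 1 ≤ u) :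
    ∑ A ∈ powersetCard a univ, u ^ #(A ∩ B)
      ≤ (card α).choose a * (1 + a / card α * (u - 1)) ^ #B := by
  have hpow (s : Finset α) : u ^ #s = ∑ T ∈ s.powerset, (u - 1) ^ #T := by
    simpa [add_sub_cancel] using prod_one_add (f := fun _ => u - 1) s
  calc ∑ A ∈ powersetCard a univ, u ^ #(A ∩ B)
      = ∑ A ∈ powersetCard a univ, ∑ T ∈ (A ∩ B).powerset, (u - 1) ^ #T := by simp only [hpow]
    _ = ∑ T ∈ B.powerset, ∑ A ∈ powersetCard a univ with T ⊆ A, (u - 1) ^ #T := by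
        refine sum_comm' fun A T => ?_
        simp only [mem_powerset, subset_inter_iff, mem_filter]
        tauto
    _ = ∑ T ∈ B.powerset, (u - 1) ^ #T * #{A ∈ powersetCard a univ | T ⊆ A} := by
        simp [sum_const, mul_comm]
    _ ≤ ∑ T ∈ B.powerset, (u - 1) ^ #T * ((card α).choose a * ((a : ℝ) / card α) ^ #T) := by
        gcongr with T
        exact card_filter_powersetCard_subset_le T a
    _ = (card α).choose a * (1 + a / card α * (u - 1)) ^ #B := by
        rw [add_comm, ← Finset.sum_pow_mul_eq_add_pow, mul_sum]
        simp only [one_pow, mul_one, mul_pow]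
        exact sum_congr rfl fun T _ => by ring

lemma card_filter_powersetCard_add_le_card_inter_le (B : Finset α) {a : ℕ} (ha : a ≤ card α)
    {k : ℝ} (hk : 0 ≤ k) :
    (#{A ∈ powersetCard a univ | a * #B / card α + k ≤ #(A ∩ B)} : ℝ)
      ≤ (card α).choose a * exp (-2 * k ^ 2 / card α) := by
  set N : ℝ := card α
  set p : ℝ := a / N
  set m : ℝ := a * #B / N
  set l : ℝ := 4 * k / N
  have hl : 0 ≤ l := by positivity
  have hp0 : 0 ≤ p := by positivity
  have hp1 : p ≤ 1 := div_le_one_of_le₀ (by simp only [N]; exact_mod_cast ha) (Nat.cast_nonneg _)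
  have hBN : (#B : ℝ) ≤ N := by simp only [N]; exact_mod_cast card_le_univ B
  have hexponent : -(l * (m + k)) + #B * (p * l + l ^ 2 / 8) ≤ -2 * k ^ 2 / N := by
    calc -(l * (m + k)) + #B * (p * l + l ^ 2 / 8) = -(l * k) + #B * (l ^ 2 / 8) := by ring
      _ ≤ -(l * k) + N * (l ^ 2 / 8) := by gcongr
      _ = -2 * k ^ 2 / N := by
        rcases eq_or_ne N 0 with hN | hN
        · simp [l, hN]
        · simp only [l]; field_simp; ring
  calc (#{A ∈ powersetCard a univ | m + k ≤ #(A ∩ B)} : ℝ)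
      = ∑ A ∈ powersetCard a univ with m + k ≤ #(A ∩ B), 1 := by simp
    _ ≤ ∑ A ∈ powersetCard a univ with m + k ≤ #(A ∩ B),
          exp (-(l * (m + k))) * exp l ^ #(A ∩ B) := by
        gcongr with A hA
        rw [← exp_nat_mul, ← exp_add]
        exact one_le_exp (by nlinarith [(mem_filter.1 hA).2])
    _ ≤ ∑ A ∈ powersetCard a univ, exp (-(l * (m + k))) * exp l ^ #(A ∩ B) :=
        sum_le_sum_of_subset_of_nonneg (filter_subset _ _) fun _ _ _ => by positivity
    _ ≤ exp (-(l * (m + k))) * ((card α).choose a * (1 + p * (exp l - 1)) ^ #B) := by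
        rw [← mul_sum]
        gcongr
        exact sum_powersetCard_pow_card_inter_le B a (one_le_exp hl)
    _ ≤ exp (-(l * (m + k))) * ((card α).choose a * exp (p * l + l ^ 2 / 8) ^ #B) := by
        gcongr
        · exact add_nonneg zero_le_one (mul_nonneg hp0 (sub_nonneg.2 (one_le_exp hl)))
        · exact one_add_mul_exp_sub_one_le_exp p l hp0 hp1
    _ = (card α).choose a * exp (-(l * (m + k)) + #B * (p * l + l ^ 2 / 8)) := by
        rw [← exp_nat_mul, exp_add]; ring
    _ ≤ (card α).choose a * exp (-2 * k ^ 2 / N) := by gcongr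

lemma card_filter_powersetCard_le_abs_card_inter_sub_le (B : Finset α) {a : ℕ}
    (ha : a ≤ card α) {k : ℝ} (hk : 0 ≤ k) :
    (#{A ∈ powersetCard a univ | k ≤ |(#(A ∩ B) : ℝ) - a * #B / card α|} : ℝ)
      ≤ 2 * (card α).choose a * exp (-2 * k ^ 2 / card α) := by
  have hcompl : ∀ A ∈ powersetCard a univ,
      (#(A ∩ Bᶜ) : ℝ) - a * #Bᶜ / card α = -(#(A ∩ B) - a * #B / card α) := by
    intro A hA
    have hA : #(A ∩ B) + #(A ∩ Bᶜ) = a := by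
      rw [← (mem_powersetCard.1 hA).2, ← card_union_of_disjoint, ← inter_union_distrib_left,
        union_compl, inter_univ]
      exact (disjoint_compl_right (a := B)).mono inter_subset_right inter_subset_right
    have hB : #Bᶜ + #B = card α := card_compl_add_card B
    rw [← Nat.cast_inj (R := ℝ), Nat.cast_add] at hA hB
    rw [eq_sub_of_add_eq' hA, eq_sub_of_add_eq hB]
    rcases Nat.eq_zero_or_pos (card α) with hN | hN
    · obtain rfl : a = 0 := by omega
      simp
    · field_simp; ring
  have hsub : {A ∈ powersetCard a (univ : Finset α) | k ≤ |(#(A ∩ B) : ℝ) - a * #B / card α|}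
      ⊆ {A ∈ powersetCard a (univ : Finset α) | a * #B / card α + k ≤ #(A ∩ B)}
        ∪ {A ∈ powersetCard a (univ : Finset α) | a * #Bᶜ / card α + k ≤ #(A ∩ Bᶜ)} := by
    intro A hA
    obtain ⟨hA, hdev⟩ := mem_filter.1 hA
    rcases le_abs'.1 hdev with hlow | hhigh
    · exact mem_union_right _ (mem_filter.2 ⟨hA, by linarith [hcompl A hA]⟩)
    · exact mem_union_left _ (mem_filter.2 ⟨hA, by linarith⟩)
  calc (#{A ∈ powersetCard a univ | k ≤ |(#(A ∩ B) : ℝ) - a * #B / card α|} : ℝ)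
      ≤ #{A ∈ powersetCard a univ | a * #B / card α + k ≤ #(A ∩ B)}
        + #{A ∈ powersetCard a univ | a * #Bᶜ / card α + k ≤ #(A ∩ Bᶜ)} := by
        exact_mod_cast (card_le_card hsub).trans (card_union_le _ _)
    _ ≤ (card α).choose a * exp (-2 * k ^ 2 / card α)
        + (card α).choose a * exp (-2 * k ^ 2 / card α) := by
        gcongr <;> exact card_filter_powersetCard_add_le_card_inter_le _ ha hk
    _ = 2 * (card α).choose a * exp (-2 * k ^ 2 / card α) := by ring

noncomputable def interDeviation {d : ℕ} (a : Fin d → ℕ) (A : Fin d → Finset α) : ℝ :=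
  |(#(univ.inf A) : ℝ) - card α * ∏ i, ((a i : ℝ) / card α)|

lemma interDeviation_fin_one {a : Fin 1 → ℕ} {A : Fin 1 → Finset α} (hA : #(A 0) = a 0) :
    interDeviation a A = 0 := by
  have haN : a 0 ≤ card α := hA ▸ card_le_univ (A 0)
  rcases Nat.eq_zero_or_pos (card α) with hN | hN
  · simp [interDeviation, hA, hN, show a 0 = 0 by omega]
  · simp [interDeviation, hA]
    field_simp
    ring

lemma interDeviation_succ_le {d : ℕ} {a : Fin (d + 1) → ℕ} (ha : a 0 ≤ card α)
    (A : Fin (d + 1) → Finset α) :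
    interDeviation a A
      ≤ |(#(A 0 ∩ univ.inf (Fin.tail A)) : ℝ) - a 0 * #(univ.inf (Fin.tail A)) / card α|
        + interDeviation (Fin.tail a) (Fin.tail A) := by
  set Y : ℝ := ((#(univ.inf (Fin.tail A)) : ℕ) : ℝ)
  set P : ℝ := ∏ i, ((Fin.tail a i : ℝ) / card α)
  have hp0 : (0 : ℝ) ≤ a 0 / card α := by positivity
  have hp1 : (a 0 : ℝ) / card α ≤ 1 :=
    div_le_one_of_le₀ (by exact_mod_cast ha) (Nat.cast_nonneg _)
  have hsplit : (#(univ.inf A) : ℝ) - card α * ∏ i, ((a i : ℝ) / card α)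
      = ((#(A 0 ∩ univ.inf (Fin.tail A)) : ℝ) - a 0 * Y / card α)
        + a 0 / card α * (Y - card α * P) := by
    rw [Fin.inf_univ_succ, Fin.prod_univ_succ, inf_eq_inter]
    simp only [P, Y, Fin.tail]
    ring
  rw [interDeviation, interDeviation, hsplit]
  refine (abs_add_le _ _).trans (add_le_add_right ?_ _)
  rw [abs_mul, abs_of_nonneg hp0]
  exact mul_le_of_le_one_left (abs_nonneg _) hp1

lemma card_filter_add_le_interDeviation_le {d : ℕ} {a : Fin (d + 1) → ℕ}
    (ha : ∀ i, a i ≤ card α) (c : ℝ) {k M : ℝ} (hk : 0 ≤ k)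
    (htail : (#{A ∈ piFinset fun i => powersetCard (a i.succ) (univ : Finset α) |
        c < interDeviation (Fin.tail a) A} : ℝ)
      ≤ M * ∏ i : Fin d, ((card α).choose (a i.succ) : ℝ)) :
    (#{A ∈ piFinset fun i => powersetCard (a i) (univ : Finset α) |
        c + k ≤ interDeviation a A} : ℝ)
      ≤ (M + 2 * exp (-2 * k ^ 2 / card α)) * ∏ i, ((card α).choose (a i) : ℝ) := by
  set S : ∀ i, Finset (Finset α) := fun i => powersetCard (a i) univ
  have hsub : {A ∈ piFinset S | c + k ≤ interDeviation a A}
      ⊆ {A ∈ piFinset S | c < interDeviation (Fin.tail a) (Fin.tail A)}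
        ∪ {A ∈ piFinset S | k ≤ |(#(A 0 ∩ univ.inf (Fin.tail A)) : ℝ)
            - a 0 * #(univ.inf (Fin.tail A)) / card α|} := by
    intro A hA
    obtain ⟨hAS, hdev⟩ := mem_filter.1 hA
    have := interDeviation_succ_le (ha 0) A
    by_contra h
    simp only [mem_union, mem_filter, hAS, true_and, not_or, not_lt, not_le] at h
    linarith
  have hfirst : #{A ∈ piFinset S | c < interDeviation (Fin.tail a) (Fin.tail A)}
      = #(S 0) * #{A ∈ piFinset fun i => powersetCard (a i.succ) univ |
          c < interDeviation (Fin.tail a) A} :=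
    card_consEquiv_filter_piFinset S fun A => c < interDeviation (Fin.tail a) A
  have hsecond := card_filter_piFinset_zero_tail_le S
    (fun x t => k ≤ |(#(x ∩ univ.inf t) : ℝ) - a 0 * #(univ.inf t) / card α|)
    (C := 2 * (card α).choose (a 0) * exp (-2 * k ^ 2 / card α))
    (fun t _ => card_filter_powersetCard_le_abs_card_inter_sub_le _ (ha 0) hk)
  have hcard : #(piFinset (Fin.tail S)) = ∏ i : Fin d, (card α).choose (a i.succ) := by
    simp [S, Fin.tail, card_piFinset]
  calc (#{A ∈ piFinset S | c + k ≤ interDeviation a A} : ℝ)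
      ≤ #{A ∈ piFinset S | c < interDeviation (Fin.tail a) (Fin.tail A)}
        + #{A ∈ piFinset S | k ≤ |(#(A 0 ∩ univ.inf (Fin.tail A)) : ℝ)
            - a 0 * #(univ.inf (Fin.tail A)) / card α|} := by
        exact_mod_cast (card_le_card hsub).trans (card_union_le _ _)
    _ ≤ (card α).choose (a 0) * (M * ∏ i : Fin d, ((card α).choose (a i.succ) : ℝ))
        + 2 * (card α).choose (a 0) * exp (-2 * k ^ 2 / card α) * #(piFinset (Fin.tail S)) := by
        rw [hfirst]
        push_cast
        gcongr
        simp [S]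
    _ = (M + 2 * exp (-2 * k ^ 2 / card α)) * ∏ i, ((card α).choose (a i) : ℝ) := by
        rw [hcard, Fin.prod_univ_succ]
        push_cast
        ring

/-- The strict inequality makes the case of a single set vacuous. -/
lemma card_filter_lt_interDeviation_le (d : ℕ) {a : Fin (d + 1) → ℕ} (ha : ∀ i, a i ≤ card α)
    {k : ℝ} (hk : 0 ≤ k) :
    (#{A ∈ piFinset fun i => powersetCard (a i) (univ : Finset α) |
        d * k < interDeviation a A} : ℝ)
      ≤ 2 * d * exp (-2 * k ^ 2 / card α) * ∏ i, ((card α).choose (a i) : ℝ) := by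
  induction d with
  | zero =>
    rw [filter_false_of_mem fun A hA => ?_]
    · simp
    rw [interDeviation_fin_one (mem_powersetCard.1 (mem_piFinset.1 hA 0)).2]
    simp
  | succ d ih =>
    calc (#{A ∈ piFinset fun i => powersetCard (a i) (univ : Finset α) |
            ((d + 1 : ℕ) : ℝ) * k < interDeviation a A} : ℝ)
        ≤ #{A ∈ piFinset fun i => powersetCard (a i) (univ : Finset α) |
            d * k + k ≤ interDeviation a A} := by
          gcongr with A
          push_cast
          intro h
          linarith
      _ ≤ (2 * d * exp (-2 * k ^ 2 / card α) + 2 * exp (-2 * k ^ 2 / card α))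
            * ∏ i, ((card α).choose (a i) : ℝ) :=
          card_filter_add_le_interDeviation_le ha _ hk (ih (a := Fin.tail a) fun i => ha _)
      _ = 2 * (d + 1 : ℕ) * exp (-2 * k ^ 2 / card α) * ∏ i, ((card α).choose (a i) : ℝ) := by
          push_cast
          ring

end

/-- Let `A_1, …, A_d` (`d ≥ 2`) be independent uniformly random subsets of `{1,…,n}` with
`|A_i| = a_i`.  Then for every `k > 0`,
`P(| |A_1 ∩ ⋯ ∩ A_d| − n ∏ (a_i/n) | ≥ (d−1)k) ≤ 2(d−1) exp(−2k²/n)`. -/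
theorem stmt11 (n d : ℕ) (hd : 2 ≤ d) (a : Fin d → ℕ) (ha : ∀ i, a i ≤ n)
    (k : ℝ) (hk : 0 < k) :
    (Nat.card {A : Fin d → Finset (Fin n) //
        (∀ i, (A i).card = a i) ∧
        ((d : ℝ) - 1) * k ≤
          |((Finset.univ.inf A).card : ℝ) - n * ∏ i, ((a i : ℝ) / n)|} : ℝ) /
      (∏ i, (n.choose (a i) : ℝ)) ≤ 2 * ((d : ℝ) - 1) * Real.exp (-2 * k ^ 2 / n) := by
  obtain ⟨d, rfl⟩ : ∃ m, d = m + 2 := ⟨d - 2, by omega⟩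
  have ha' : ∀ i, a i ≤ card (Fin n) := by simpa using ha
  have key := card_filter_add_le_interDeviation_le ha' (d * k) hk.le
    (card_filter_lt_interDeviation_le d (fun i => ha' _) hk.le)
  simp only [Fintype.card_fin, interDeviation] at key
  have hcoeff : ((d + 2 : ℕ) : ℝ) - 1 = d + 1 := by push_cast; ring
  rw [Nat.card_eq_fintype_card, Fintype.card_subtype, hcoeff, add_one_mul,
    div_le_iff₀ (prod_pos fun i _ => by exact_mod_cast Nat.choose_pos (ha i))]
  refine (Eq.trans_le ?_ key).trans_eq (by ring)
  congr 2
  ext A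
  simp [mem_piFinset]
end

section
/- Let V = ⊕_{i=1}^ℓ ⟨v_i⟩ be a finite abelian group with o_1 | o_2 | ... | o_ℓ where o_i is the order of v_i. Let q ∈ V^n satisfy that each v_i occurs among the entries of q, and let r ∈ V^n satisfy ⟨q ⊗ r⟩ := Σ_{k=1}^n q_k ⊗ r_k ∈ I_2(V). Then there is a symmetric integer n×n matrix A with all diagonal entries even such that r = Aq. -/
/-!
Write `o i` for the order of `v i` and expand everything in the generators `v i`. If
`r = R v` and `w = Rᵀ q`, then `∑ q_k ⊗ r_k = ∑ w_i ⊗ v_i`, and since `V ⊗ V` is the direct sum of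
the cyclic groups `⟨v_i ⊗ v_j⟩ ≅ ℤ/gcd(o_i, o_j)`, comparing with an element `∑ (X + Xᵀ)_ij v_i ⊗ v_j`
of `I_2(V)` determines the coefficients of `w` modulo these gcd's. Because the orders form a
divisibility chain, this freedom can be absorbed in a correction `U + Uᵀ`, giving
`w = (Y + Yᵀ) v`. If `P` selects the positions of the `v i` in `q`, so that `v = Pᵀ q`, then
`Z = R Pᵀ - P Y Pᵀ` satisfies `r = (Z + Zᵀ) q`.
-/

open TensorProduct Matrix

lemma exists_add_transpose_modEq {ι : Type*} [LinearOrder ι] (o : ι → ℕ)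
    (ho : ∀ i j, i ≤ j → o i ∣ o j) (E : Matrix ι ι ℤ)
    (hE : ∀ i j, ((o i).gcd (o j) : ℤ) ∣ E i j) :
    ∃ U : Matrix ι ι ℤ, ∀ i j, (U + Uᵀ) i j ≡ E i j [ZMOD o j] := by
  -- Copy the upper triangle of `E`; below the diagonal `o j ∣ o i`, so `E i j ≡ E j i [ZMOD o j]`.
  refine ⟨of fun i j => if i < j then E i j else 0, fun i j => ?_⟩
  simp only [Matrix.add_apply, transpose_apply, of_apply]
  rcases lt_trichotomy i j with hij | rfl | hji
  · simp [hij, not_lt_of_gt hij, Int.ModEq.refl]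
  · simpa [Int.modEq_iff_dvd, Nat.gcd_self] using hE i i
  · have hgcd : (o j).gcd (o i) = o j := Nat.gcd_eq_left (ho j i hji.le)
    have h₁ := hE i j
    have h₂ := hE j i
    rw [Nat.gcd_comm, hgcd] at h₁
    rw [hgcd] at h₂
    simpa [hji, not_lt_of_gt hji, Int.modEq_iff_dvd] using dvd_sub h₁ h₂

section IntMulVec

variable {V : Type*} [AddCommGroup V] {m n p : Type*} [Fintype n] [Fintype p]

def intMulVec (A : Matrix m n ℤ) (x : n → V) : m → V := fun i => ∑ j, A i j • x j

lemma intMulVec_add (A B : Matrix m n ℤ) (x : n → V) :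
    intMulVec (A + B) x = intMulVec A x + intMulVec B x := by
  ext i
  simp only [intMulVec, Matrix.add_apply, add_smul, Finset.sum_add_distrib, Pi.add_apply]

lemma intMulVec_sub (A B : Matrix m n ℤ) (x : n → V) :
    intMulVec (A - B) x = intMulVec A x - intMulVec B x := by
  ext i
  simp only [intMulVec, Matrix.sub_apply, sub_smul, Finset.sum_sub_distrib, Pi.sub_apply]

lemma intMulVec_zero (A : Matrix m n ℤ) : intMulVec A (0 : n → V) = 0 := by
  ext i
  simp [intMulVec]

lemma intMulVec_mul (A : Matrix m p ℤ) (B : Matrix p n ℤ) (x : n → V) :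
    intMulVec (A * B) x = intMulVec A (intMulVec B x) := by
  ext i
  simp only [intMulVec, mul_apply, Finset.sum_smul, Finset.smul_sum, mul_smul]
  exact Finset.sum_comm

lemma sum_intMulVec_transpose_tmul (R : Matrix n p ℤ) (q : n → V) (v : p → V) :
    ∑ i, intMulVec Rᵀ q i ⊗ₜ[ℤ] v i = ∑ k, q k ⊗ₜ[ℤ] intMulVec R v k := by
  simp only [intMulVec, transpose_apply, sum_tmul, tmul_sum, smul_tmul]
  exact Finset.sum_comm

end IntMulVec

section Tensors

variable {V ι : Type*} [AddCommGroup V] [Fintype ι]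

variable (V) in
/-- The subgroup `I_2(V)`. -/
def symmetrizedTensors : Submodule ℤ (V ⊗[ℤ] V) :=
  Submodule.span ℤ {x | ∃ a b : V, x = a ⊗ₜ[ℤ] b + b ⊗ₜ[ℤ] a}

def tensorOfMatrix (v : ι → V) : Matrix ι ι ℤ →ₗ[ℤ] V ⊗[ℤ] V where
  toFun S := ∑ i, ∑ j, S i j • v i ⊗ₜ[ℤ] v j
  map_add' S T := by simp only [Matrix.add_apply, add_smul, Finset.sum_add_distrib]
  map_smul' c S := by
    simp only [Matrix.smul_apply, smul_eq_mul, mul_smul, Finset.smul_sum, RingHom.id_apply]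

lemma tensorOfMatrix_apply (v : ι → V) (S : Matrix ι ι ℤ) :
    tensorOfMatrix v S = ∑ i, ∑ j, S i j • v i ⊗ₜ[ℤ] v j := rfl

lemma sum_intMulVec_tmul_eq_tensorOfMatrix_transpose (v : ι → V) (D : Matrix ι ι ℤ) :
    ∑ i, intMulVec D v i ⊗ₜ[ℤ] v i = tensorOfMatrix v Dᵀ := by
  simp only [intMulVec, tensorOfMatrix_apply, transpose_apply, sum_tmul, smul_tmul']
  exact Finset.sum_comm

lemma sum_zsmul_tmul_sum_zsmul (v : ι → V) (α β : ι → ℤ) :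
    (∑ i, α i • v i) ⊗ₜ[ℤ] (∑ j, β j • v j) = tensorOfMatrix v (vecMulVec α β) := by
  simp only [tensorOfMatrix_apply, sum_tmul, tmul_sum, smul_tmul_smul, vecMulVec_apply]
  exact Finset.sum_comm

lemma exists_sum_zsmul_eq {v : ι → V} (hv : Submodule.span ℤ (Set.range v) = ⊤) (x : V) :
    ∃ c : ι → ℤ, ∑ i, c i • v i = x :=
  (Submodule.mem_span_range_iff_exists_fun ℤ).mp (hv ▸ Submodule.mem_top)

lemma exists_tensorOfMatrix_add_transpose_eq {v : ι → V}
    (hv : Submodule.span ℤ (Set.range v) = ⊤) {x : V ⊗[ℤ] V} (hx : x ∈ symmetrizedTensors V) :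
    ∃ X : Matrix ι ι ℤ, tensorOfMatrix v (X + Xᵀ) = x := by
  induction hx using Submodule.span_induction with
  | mem x hx =>
    obtain ⟨a, b, rfl⟩ := hx
    obtain ⟨α, rfl⟩ := exists_sum_zsmul_eq hv a
    obtain ⟨β, rfl⟩ := exists_sum_zsmul_eq hv b
    refine ⟨vecMulVec α β, ?_⟩
    rw [map_add, transpose_vecMulVec, sum_zsmul_tmul_sum_zsmul, sum_zsmul_tmul_sum_zsmul]
  | zero => exact ⟨0, by simp⟩
  | add x y _ _ hx hy =>
    obtain ⟨X, rfl⟩ := hx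
    obtain ⟨Y, rfl⟩ := hy
    exact ⟨X + Y, by rw [transpose_add, add_add_add_comm, map_add]⟩
  | smul c x _ hx =>
    obtain ⟨X, rfl⟩ := hx
    exact ⟨c • X, by rw [transpose_smul, ← smul_add, map_smul]⟩

end Tensors

section DirectSum

variable {V ι : Type*} [AddCommGroup V] [DecidableEq ι] {v : ι → V}

lemma span_range_eq_top_of_isInternal
    (hv : DirectSum.IsInternal fun i => (Submodule.span ℤ {v i} : Submodule ℤ V)) :
    Submodule.span ℤ (Set.range v) = ⊤ := by
  rw [Submodule.span_range_eq_iSup, hv.submodule_iSup_eq_top]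

lemma exists_coord_mod
    (hv : DirectSum.IsInternal fun i => (Submodule.span ℤ {v i} : Submodule ℤ V)) {a : ι}
    {m : ℕ} (hm : m ∣ addOrderOf (v a)) :
    ∃ f : V →ₗ[ℤ] ℤ ⧸ Ideal.span {(m : ℤ)}, ∀ j, f (v j) = if j = a then 1 else 0 := by
  have hle : Ideal.span {(addOrderOf (v a) : ℤ)} ≤ Ideal.span {(m : ℤ)} :=
    Ideal.span_singleton_le_span_singleton.mpr (Int.natCast_dvd_natCast.mpr hm)
  refine ⟨(Ideal.Quotient.factor hle).toIntAlgHom.toLinearMap ∘ₗ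
    (CharacterModule.intSpanEquivQuotAddOrderOf (v a)).toLinearMap ∘ₗ
    DirectSum.component ℤ ι _ a ∘ₗ
      (LinearEquiv.ofBijective (DirectSum.coeLinearMap _) hv).symm.toLinearMap, fun j => ?_⟩
  change Ideal.Quotient.factor hle (CharacterModule.intSpanEquivQuotAddOrderOf (v a)
    ((LinearEquiv.ofBijective (DirectSum.coeLinearMap _) hv).symm (v j) a)) = _
  by_cases hja : j = a
  · subst hja
    rw [hv.ofBijective_coeLinearMap_of_mem (Submodule.mem_span_singleton_self (v j)),
      CharacterModule.intSpanEquivQuotAddOrderOf_apply_self, if_pos rfl]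
    rfl
  · rw [hv.ofBijective_coeLinearMap_of_mem_ne hja (Submodule.mem_span_singleton_self (v j)),
      map_zero, map_zero, if_neg hja]

variable [Fintype ι]

lemma gcd_addOrderOf_dvd_of_tensorOfMatrix_eq_zero
    (hv : DirectSum.IsInternal fun i => (Submodule.span ℤ {v i} : Submodule ℤ V))
    {d : Matrix ι ι ℤ} (hd : tensorOfMatrix v d = 0) (a b : ι) :
    ((addOrderOf (v a)).gcd (addOrderOf (v b)) : ℤ) ∣ d a b := by
  obtain ⟨fa, hfa⟩ := exists_coord_mod hv (Nat.gcd_dvd_left (addOrderOf (v a)) (addOrderOf (v b)))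
  obtain ⟨fb, hfb⟩ := exists_coord_mod hv (Nat.gcd_dvd_right (addOrderOf (v a)) (addOrderOf (v b)))
  have h := congrArg (TensorProduct.lift ((LinearMap.mul ℤ _).compl₁₂ fa fb)) hd
  simp only [tensorOfMatrix_apply, map_sum, map_zsmul, lift.tmul, LinearMap.compl₁₂_apply,
    LinearMap.mul_apply', hfa, hfb, ite_zero_mul_ite_zero, mul_one, smul_ite, smul_zero,
    map_zero, ite_and, Finset.sum_ite_eq', Finset.mem_univ, if_true, Finset.sum_ite_irrel,
    Finset.sum_const_zero, zsmul_one] at h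
  rwa [← eq_intCast (Ideal.Quotient.mk _), Ideal.Quotient.eq_zero_iff_dvd] at h

end DirectSum

theorem exists_intMulVec_add_transpose_eq {V ι : Type*} [AddCommGroup V] [Fintype ι]
    [LinearOrder ι] {v : ι → V}
    (hv : DirectSum.IsInternal fun i => (Submodule.span ℤ {v i} : Submodule ℤ V))
    (hdvd : ∀ i j, i ≤ j → addOrderOf (v i) ∣ addOrderOf (v j))
    (w : ι → V) (hw : ∑ i, w i ⊗ₜ[ℤ] v i ∈ symmetrizedTensors V) :
    ∃ Y : Matrix ι ι ℤ, w = intMulVec (Y + Yᵀ) v := by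
  have hspan := span_range_eq_top_of_isInternal hv
  choose D hD using fun i => exists_sum_zsmul_eq hspan (w i)
  replace hD : intMulVec (of D) v = w := funext hD
  obtain ⟨X, hX⟩ := exists_tensorOfMatrix_add_transpose_eq hspan hw
  have hdiff : tensorOfMatrix v ((of D)ᵀ - (X + Xᵀ)) = 0 := by
    rw [map_sub, hX, ← sum_intMulVec_tmul_eq_tensorOfMatrix_transpose, hD, sub_self]
  have hE : ∀ i j, ((addOrderOf (v i)).gcd (addOrderOf (v j)) : ℤ) ∣ (of D - (X + Xᵀ)) i j := by
    intro i j
    have h := gcd_addOrderOf_dvd_of_tensorOfMatrix_eq_zero hv hdiff j i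
    rwa [Nat.gcd_comm, Matrix.sub_apply, transpose_apply, (isSymm_add_transpose_self X).apply]
      at h
  obtain ⟨U, hU⟩ := exists_add_transpose_modEq _ hdvd _ hE
  refine ⟨X + U, ?_⟩
  rw [← hD]
  ext i
  refine Finset.sum_congr rfl fun j _ => zsmul_eq_zsmul_iff_modEq.mpr ?_
  have h := (hU i j).add_left ((X + Xᵀ) i j)
  simp only [Matrix.add_apply, Matrix.sub_apply, transpose_apply, of_apply] at h ⊢
  convert h.symm using 1 <;> ring

theorem stmt13_general (V : Type*) [AddCommGroup V] (ℓ n : ℕ)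
    (v : Fin ℓ → V)
    (hdecomp : DirectSum.IsInternal
      (fun i : Fin ℓ => (Submodule.span ℤ {v i} : Submodule ℤ V)))
    (hdvd : ∀ i j : Fin ℓ, i ≤ j → addOrderOf (v i) ∣ addOrderOf (v j))
    (q r : Fin n → V)
    (hq : ∀ i, ∃ k, q k = v i)
    (hr : (∑ k, q k ⊗ₜ[ℤ] r k) ∈ Submodule.span ℤ
        {x : TensorProduct ℤ V V | ∃ a b : V, x = a ⊗ₜ[ℤ] b + b ⊗ₜ[ℤ] a}) :
    ∃ A : Matrix (Fin n) (Fin n) ℤ, A.IsSymm ∧ (∀ i, Even (A i i)) ∧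
      ∀ i, r i = ∑ j, A i j • q j := by
  choose σ hσ using hq
  choose R hR using fun k => exists_sum_zsmul_eq (span_range_eq_top_of_isInternal hdecomp) (r k)
  replace hR : intMulVec (of R) v = r := funext hR
  let P : Matrix (Fin n) (Fin ℓ) ℤ := of fun k i => if k = σ i then 1 else 0
  have hP : intMulVec Pᵀ q = v := by
    ext i
    simp [intMulVec, P, ite_smul, hσ]
  obtain ⟨Y, hY⟩ := exists_intMulVec_add_transpose_eq hdecomp hdvd (intMulVec (of R)ᵀ q)
    (by rwa [sum_intMulVec_transpose_tmul, hR])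
  set Z := of R * Pᵀ - P * Y * Pᵀ
  have hZ : Z + Zᵀ = of R * Pᵀ + P * ((of R)ᵀ - (Y + Yᵀ) * Pᵀ) := by
    simp only [Z, transpose_sub, transpose_mul, transpose_transpose, Matrix.mul_sub,
      Matrix.add_mul, Matrix.mul_add, Matrix.mul_assoc]
    abel
  have hAq : intMulVec (Z + Zᵀ) q = r := by
    rw [hZ, intMulVec_add, intMulVec_mul, hP, hR, intMulVec_mul, intMulVec_sub, intMulVec_mul, hP,
      ← hY, sub_self, intMulVec_zero, add_zero]
  exact ⟨Z + Zᵀ, isSymm_add_transpose_self Z, fun i => ⟨Z i i, rfl⟩,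
    fun i => (congrFun hAq i).symm⟩

/-- Let `V = ⊕_{i=1}^ℓ ⟨v_i⟩` be a finite abelian group with `o_1 ∣ o_2 ∣ ⋯ ∣ o_ℓ`
(`o_i` the order of `v_i`).  Let `q ∈ V^n` contain each `v_i` among its entries and let
`r ∈ V^n` satisfy `Σ_k q_k ⊗ r_k ∈ I_2(V)` (the subgroup of `V ⊗ V` generated by all
`a⊗b + b⊗a`).  Then there is a symmetric integer matrix `A` with even diagonal entries
such that `r = Aq`. -/
theorem stmt13 (V : Type*) [AddCommGroup V] [Fintype V] (ℓ n : ℕ)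
    (v : Fin ℓ → V)
    (hdecomp : DirectSum.IsInternal
      (fun i : Fin ℓ => (Submodule.span ℤ {v i} : Submodule ℤ V)))
    (hdvd : ∀ i j : Fin ℓ, i ≤ j → addOrderOf (v i) ∣ addOrderOf (v j))
    (q r : Fin n → V)
    (hq : ∀ i, ∃ k, q k = v i)
    (hr : (∑ k, q k ⊗ₜ[ℤ] r k) ∈ Submodule.span ℤ
        {x : TensorProduct ℤ V V | ∃ a b : V, x = a ⊗ₜ[ℤ] b + b ⊗ₜ[ℤ] a}) :
    ∃ A : Matrix (Fin n) (Fin n) ℤ, A.IsSymm ∧ (∀ i, Even (A i i)) ∧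
      ∀ i, r i = ∑ j, A i j • q j :=
  stmt13_general V ℓ n v hdecomp hdvd q r hq hr
end

section
/- Let V be a finite abelian group, n ≥ 2|V|, and q ∈ V^n whose entries generate V. Let r ∈ V^n with Σ_k q_k ⊗ r_k ∈ I_2(V). Then there is a symmetric integer matrix A with even diagonal entries such that r = Aq. -/
/-!
Let `φ : ℤⁿ → V` send `eₖ` to `qₖ`; it is surjective. The matrix `A` is read off an element
`t ∈ I₂(ℤⁿ)`, whose outer-product matrix is symmetric with even diagonal, and `r = Aq` says that
`s = ∑ eₖ ⊗ rₖ ∈ ℤⁿ ⊗ V` equals `(1 ⊗ φ) t`. Since `φ ⊗ φ` maps `I₂(ℤⁿ)` onto `I₂(V)`, the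
hypothesis gives `t` with `(φ ⊗ 1) s = (φ ⊗ 1)(1 ⊗ φ) t`. By right exactness of `⊗`, the
difference `s - (1 ⊗ φ) t` comes from `ker φ ⊗ V`, and for `k ∈ ker φ` we have
`k ⊗ φ w = (1 ⊗ φ)(k ⊗ w + w ⊗ k)`, so `s ∈ (1 ⊗ φ)(I₂(ℤⁿ))`.
-/

open TensorProduct

namespace TensorProduct

variable (R M : Type*) [CommRing R] [AddCommGroup M] [Module R M]

/-- The submodule `I₂(M)` of the paper. -/
def symmSpan : Submodule R (M ⊗[R] M) :=
  Submodule.span R {x | ∃ a b : M, x = a ⊗ₜ b + b ⊗ₜ a}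

variable {R M} {N : Type*} [AddCommGroup N] [Module R N]

theorem map_symmSpan_of_surjective {f : M →ₗ[R] N} (hf : Function.Surjective f) :
    (symmSpan R M).map (map f f) = symmSpan R N := by
  rw [symmSpan, symmSpan, Submodule.map_span]
  congr 1
  ext x
  constructor
  · rintro ⟨_, ⟨a, b, rfl⟩, rfl⟩
    exact ⟨f a, f b, by simp⟩
  · rintro ⟨a, b, rfl⟩
    obtain ⟨a, rfl⟩ := hf a
    obtain ⟨b, rfl⟩ := hf b
    exact ⟨_, ⟨a, b, rfl⟩, by simp⟩

theorem rTensor_ker_subtype_mem_map_symmSpan {f : M →ₗ[R] N} (hf : Function.Surjective f)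
    (u : LinearMap.ker f ⊗[R] N) :
    (LinearMap.ker f).subtype.rTensor N u ∈ (symmSpan R M).map (f.lTensor M) := by
  induction u using TensorProduct.induction_on with
  | zero => simp
  | tmul k v =>
    obtain ⟨w, rfl⟩ := hf v
    refine ⟨(k : M) ⊗ₜ w + w ⊗ₜ (k : M), Submodule.subset_span ⟨k, w, rfl⟩, ?_⟩
    simp [LinearMap.mem_ker.mp k.2]
  | add u v hu hv => simpa using add_mem hu hv

theorem mem_map_lTensor_symmSpan_of_rTensor_mem {f : M →ₗ[R] N} (hf : Function.Surjective f)
    {s : M ⊗[R] N} (hs : f.rTensor N s ∈ symmSpan R N) :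
    s ∈ (symmSpan R M).map (f.lTensor M) := by
  rw [← map_symmSpan_of_surjective hf] at hs
  obtain ⟨t, ht, hts⟩ := hs
  have hker : f.rTensor N (s - f.lTensor M t) = 0 := by
    rw [map_sub, ← LinearMap.comp_apply, LinearMap.rTensor_comp_lTensor, hts, sub_self]
  obtain ⟨u, hu⟩ := (rTensor_exact N (LinearMap.exact_subtype_ker_map f) hf _).mp hker
  have hsum := add_mem (Submodule.mem_map_of_mem ht) (hu ▸ rTensor_ker_subtype_mem_map_symmSpan hf u)
  rwa [add_sub_cancel] at hsum

end TensorProduct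

namespace Matrix

variable {R ι : Type*} [CommRing R]

variable (R ι) in
def outerProduct : (ι → R) ⊗[R] (ι → R) →ₗ[R] Matrix ι ι R :=
  TensorProduct.lift (vecMulVecBilin R R)

@[simp]
theorem outerProduct_tmul (a b : ι → R) : outerProduct R ι (a ⊗ₜ b) = vecMulVec a b := rfl

theorem isSymm_outerProduct_and_even_diag_of_mem_symmSpan {t : (ι → R) ⊗[R] (ι → R)}
    (ht : t ∈ symmSpan R (ι → R)) :
    (outerProduct R ι t).IsSymm ∧ ∀ i, Even (outerProduct R ι t i i) := by
  induction ht using Submodule.span_induction with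
  | mem x hx =>
    obtain ⟨a, b, rfl⟩ := hx
    refine ⟨IsSymm.ext fun i j => ?_, fun i => ⟨a i * b i, ?_⟩⟩ <;>
      simp only [outerProduct_tmul, map_add, add_apply, vecMulVec_apply] <;> ring
  | zero => simp [IsSymm]
  | add x y _ _ hx hy =>
    simpa using ⟨hx.1.add hy.1, fun i => (hx.2 i).add (hy.2 i)⟩
  | smul c x _ hx =>
    refine ⟨by simpa using hx.1.smul c, fun i => ?_⟩
    obtain ⟨d, hd⟩ := hx.2 i
    exact ⟨c * d, by simp [hd, mul_add]⟩

theorem piScalarRightHom_comm_lTensor_linearCombination [Fintype ι] {N : Type*}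
    [AddCommGroup N] [Module R N] (q : ι → N) (t : (ι → R) ⊗[R] (ι → R)) (k : ι) :
    piScalarRightHom R R N ι
        (TensorProduct.comm R _ _ ((Fintype.linearCombination R q).lTensor _ t)) k =
      ∑ j, outerProduct R ι t k j • q j := by
  induction t using TensorProduct.induction_on with
  | zero => simp
  | tmul a b =>
    simp [Fintype.linearCombination_apply, vecMulVec_apply, Finset.smul_sum, mul_smul]
  | add x y hx hy => simp_all [add_smul, Finset.sum_add_distrib]

end Matrix

theorem stmt14_general (V : Type*) [AddCommGroup V] (n : ℕ) (q r : Fin n → V)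
    (hq : AddSubgroup.closure (Set.range q) = ⊤)
    (hr : (∑ k, q k ⊗ₜ[ℤ] r k) ∈ Submodule.span ℤ
        {x : TensorProduct ℤ V V | ∃ a b : V, x = a ⊗ₜ[ℤ] b + b ⊗ₜ[ℤ] a}) :
    ∃ A : Matrix (Fin n) (Fin n) ℤ, A.IsSymm ∧ (∀ i, Even (A i i)) ∧
      ∀ i, r i = ∑ j, A i j • q j := by
  set φ := Fintype.linearCombination ℤ q
  have hφ : Function.Surjective φ := by
    rw [← span_range_eq_top_iff_surjective_fintypeLinearCombination,
      ← AddSubgroup.toIntSubmodule_closure, hq, map_top]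
  set s : (Fin n → ℤ) ⊗[ℤ] V := ∑ k, Pi.single k 1 ⊗ₜ r k
  have hs : φ.rTensor V s = ∑ k, q k ⊗ₜ r k := by
    simp [s, φ, Fintype.linearCombination_apply_single]
  obtain ⟨t, ht, hts⟩ := mem_map_lTensor_symmSpan_of_rTensor_mem hφ (hs ▸ hr)
  obtain ⟨hsymm, heven⟩ := Matrix.isSymm_outerProduct_and_even_diag_of_mem_symmSpan ht
  refine ⟨Matrix.outerProduct ℤ (Fin n) t, hsymm, heven, fun i => ?_⟩
  have hs_coords : piScalarRightHom ℤ ℤ V (Fin n) (TensorProduct.comm ℤ _ _ s) = r := by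
    ext i
    simp [s, Pi.single_apply]
  rw [← Matrix.piScalarRightHom_comm_lTensor_linearCombination, hts, hs_coords]

/-- Let `V` be a finite abelian group, `n ≥ 2|V|`, and `q ∈ V^n` whose entries generate
`V`.  If `r ∈ V^n` satisfies `Σ_k q_k ⊗ r_k ∈ I_2(V)`, then there is a symmetric integer
matrix `A` with even diagonal entries such that `r = Aq`. -/
theorem stmt14 (V : Type*) [AddCommGroup V] [Fintype V] (n : ℕ)
    (hn : 2 * Fintype.card V ≤ n) (q r : Fin n → V)
    (hq : AddSubgroup.closure (Set.range q) = ⊤)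
    (hr : (∑ k, q k ⊗ₜ[ℤ] r k) ∈ Submodule.span ℤ
        {x : TensorProduct ℤ V V | ∃ a b : V, x = a ⊗ₜ[ℤ] b + b ⊗ₜ[ℤ] a}) :
    ∃ A : Matrix (Fin n) (Fin n) ℤ, A.IsSymm ∧ (∀ i, Even (A i i)) ∧
      ∀ i, r i = ∑ j, A i j • q j :=
  stmt14_general V n q r hq hr
end

section
/- Let p be a prime and let G_μ, G_λ be finite abelian p-groups of types μ and λ (partitions). Then |Hom(G_μ, G_λ)| = p^{Σ_i μ'_i λ'_i}, where μ', λ' are the transpose partitions. -/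
/-!
Homomorphisms between finite products split into homomorphisms between the factors, and
`Hom(ℤ/p^k, ℤ/p^l)` is the `p^k`-torsion of `ℤ/p^l`, of order `p^(min k l)`. So the exponent is
`∑_{i,j} min(μ_i, λ_j)`; counting, for each level `k ≥ 1`, the pairs with `k ≤ min(μ_i, λ_j)`
turns it into `∑_k μ'_k λ'_k`.
-/

open Finset

def ZMod.addMonoidHomEquivKerNsmul (n : ℕ) (A : Type*) [AddCommGroup A] :
    (ZMod n →+ A) ≃ (nsmulAddMonoidHom (α := A) n).ker :=
  (ZMod.lift n).symm.trans <| Equiv.subtypeEquiv (zmultiplesHom A).symm fun f => by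
    simp [← map_nsmul]

theorem ZMod.card_addMonoidHom (m n : ℕ) [NeZero n] :
    Nat.card (ZMod m →+ ZMod n) = n.gcd m := by
  rw [Nat.card_congr (addMonoidHomEquivKerNsmul m _), IsAddCyclic.card_nsmulAddMonoidHom_ker,
    Nat.card_zmod]

theorem ZMod.card_addMonoidHom_pow {p : ℕ} (hp : p ≠ 0) (k l : ℕ) :
    Nat.card (ZMod (p ^ k) →+ ZMod (p ^ l)) = p ^ min k l := by
  have : NeZero (p ^ l) := ⟨pow_ne_zero l hp⟩
  rw [card_addMonoidHom]
  rcases le_total k l with h | h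
  · rw [min_eq_left h, Nat.gcd_eq_right (pow_dvd_pow p h)]
  · rw [min_eq_right h, Nat.gcd_eq_left (pow_dvd_pow p h)]

theorem Nat.card_addMonoidHom_pi {ι κ : Type*} [Fintype ι] [Fintype κ]
    (A : ι → Type*) (B : κ → Type*) [∀ i, AddCommGroup (A i)] [∀ j, AddCommGroup (B j)] :
    Nat.card ((∀ i, A i) →+ ∀ j, B j) = ∏ i, ∏ j, Nat.card (A i →+ B j) := by
  classical
  let e : ((∀ i, A i) →+ ∀ j, B j) ≃ ∀ i, ∀ j, A i →+ B j :=
    (addMonoidHomLequivInt ℤ).toEquiv.trans <| (LinearMap.lsum ℤ A ℤ).symm.toEquiv.trans <|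
      Equiv.piCongrRight fun i => (LinearEquiv.linearMapPi ℤ).symm.toEquiv.trans <|
        Equiv.piCongrRight fun j => (addMonoidHomLequivInt ℤ).symm.toEquiv
  simp only [Nat.card_congr e, Nat.card_pi]

theorem Nat.card_subtype_le_eq_sum {ι : Type*} [Fintype ι] (f : ι → ℕ) (k : ℕ) :
    Nat.card {i // k ≤ f i} = ∑ i, if k ≤ f i then 1 else 0 := by
  rw [Nat.card_eq_fintype_card, Fintype.card_subtype, card_filter]

theorem Finset.sum_Icc_ite_le {x N : ℕ} (h : x ≤ N) :
    ∑ k ∈ Icc 1 N, (if k ≤ x then 1 else 0) = x := by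
  have : {k ∈ Icc 1 N | k ≤ x} = Icc 1 x := by
    ext k
    simp only [mem_filter, mem_Icc]
    omega
  rw [← card_filter, this, Nat.card_Icc, Nat.add_sub_cancel]

theorem Finset.sum_sum_min_eq_sum_Icc_card_mul_card {ι κ : Type*} [Fintype ι] [Fintype κ]
    (f : ι → ℕ) (g : κ → ℕ) {N : ℕ} (hf : ∀ i, f i ≤ N) :
    ∑ i, ∑ j, min (f i) (g j) =
      ∑ k ∈ Icc 1 N, Nat.card {i // k ≤ f i} * Nat.card {j // k ≤ g j} := by
  calc ∑ i, ∑ j, min (f i) (g j)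
      = ∑ i, ∑ j, ∑ k ∈ Icc 1 N, if k ≤ min (f i) (g j) then 1 else 0 := by
        simp only [sum_Icc_ite_le (min_le_of_left_le (hf _))]
    _ = ∑ k ∈ Icc 1 N, ∑ i, ∑ j, if k ≤ min (f i) (g j) then 1 else 0 :=
        (sum_congr rfl fun _ _ => sum_comm).trans sum_comm
    _ = _ := by
        simp only [Nat.card_subtype_le_eq_sum, sum_mul_sum, ite_zero_mul_ite_zero, le_min_iff,
          mul_one]

theorem stmt16_general (p : ℕ) (hp : p.Prime) (a b : ℕ)
    (mu : Fin a → ℕ) (lam : Fin b → ℕ) :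
    Nat.card ((∀ i, ZMod (p ^ mu i)) →+ (∀ j, ZMod (p ^ lam j))) =
      p ^ (∑ j ∈ Finset.Icc 1 (∑ i, mu i + ∑ j, lam j),
        Nat.card {i // j ≤ mu i} * Nat.card {i // j ≤ lam i}) := by
  have hmu (i : Fin a) : mu i ≤ ∑ i, mu i + ∑ j, lam j :=
    (single_le_sum (fun i _ => Nat.zero_le (mu i)) (mem_univ i)).trans (Nat.le_add_right _ _)
  simp only [Nat.card_addMonoidHom_pi, ZMod.card_addMonoidHom_pow hp.ne_zero, prod_pow_eq_pow_sum,
    sum_sum_min_eq_sum_Icc_card_mul_card mu lam hmu]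

/-- Let `G_μ = ⊕ ℤ/p^{μ_i}ℤ` and `G_λ = ⊕ ℤ/p^{λ_j}ℤ` be finite abelian `p`-groups of
types `μ` and `λ` (partitions).  Then `|Hom(G_μ, G_λ)| = p^{Σ_j μ'_j λ'_j}`, where
`μ'_j = #{i : μ_i ≥ j}` is the transpose partition (the sum over `j ≥ 1` being finite). -/
theorem stmt16 (p : ℕ) (hp : p.Prime) (a b : ℕ)
    (mu : Fin a → ℕ) (lam : Fin b → ℕ)
    (hmu : ∀ i, 0 < mu i) (hlam : ∀ j, 0 < lam j)
    (hmuA : Antitone mu) (hlamA : Antitone lam) :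
    Nat.card ((∀ i, ZMod (p ^ mu i)) →+ (∀ j, ZMod (p ^ lam j))) =
      p ^ (∑ j ∈ Finset.Icc 1 (∑ i, mu i + ∑ j, lam j),
        Nat.card {i // j ≤ mu i} * Nat.card {i // j ≤ lam i}) :=
  stmt16_general p hp a b mu lam
end
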